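/- arXiv:1309.1001 — 3 statements merged into one kernel-verified Lean document; each statement's English description precedes it below -/
import Mathlib

section
/- Let H be a Tonelli Hamiltonian on T*M, M a closed connected manifold, and let h_{H̃} be the Peierls barrier of the lift H̃ to the universal cover M̃. If there exist x̃₁, x̃₂ ∈ M̃ such that h_{H̃}(x̃₁, x̃₂) < +∞, then h_{H̃}(z̃₁, z̃₂) < +∞ for all z̃₁, z̃₂ ∈ M̃. -/
/-!
# Statement 5

Let `H` be a Tonelli Hamiltonian on `T*M`, `M` a closed connected manifold, and let
`h_{H̃}` be the Peierls barrier of the lift `H̃` to the universal cover `M̃`.  If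
`h_{H̃}(x̃₁, x̃₂) < +∞` for some `x̃₁, x̃₂ ∈ M̃`, then `h_{H̃} < +∞` everywhere.

We axiomatize the lifted Lagrangian action on the universal cover `M̃` through its
finite-time potentials `h^T(x,y)` (the minimal Lagrangian action of absolutely continuous
curves from `x` to `y` in time `T > 0`), with the basic properties coming from the Tonelli
setting on a closed connected manifold: subadditivity under concatenation, the action
bound `A·d(x,y)` along unit-speed shortest geodesics (`A = sup_{‖v‖=1} L < ∞`), the action
bound along constant loops, and the finiteness from above of the critical value.  The Mañé
critical value `c_u(H)` of the universal cover and the Peierls barrier are then defined by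
their usual formulas.
-/

open Filter

/-- (The finite-time potentials of) the lift to the universal cover `M̃` of a Tonelli
Lagrangian system on a closed connected manifold. -/
structure TonelliCover where
  /-- the universal cover `M̃` -/
  Mt : Type
  [met : MetricSpace Mt]
  /-- `h^T_{H̃}(x,y)`: the minimal action `∫₀ᵀ L̃(γ,γ̇) dt` over absolutely continuous
  curves `γ : [0,T] → M̃` with `γ(0) = x`, `γ(T) = y` (for `T > 0`) -/
  hT : ℝ → Mt → Mt → ℝ
  /-- subadditivity under concatenation of curves -/
  hT_concat : ∀ T₁ T₂ : ℝ, 0 < T₁ → 0 < T₂ → ∀ x y z : Mt,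
    hT (T₁ + T₂) x z ≤ hT T₁ x y + hT T₂ y z
  /-- `A = sup_{‖v‖ = 1} L < ∞` -/
  geo_bound : ℝ
  /-- cost of unit-speed shortest geodesics -/
  hT_geo : ∀ x y : Mt, x ≠ y → hT (dist x y) x y ≤ geo_bound * dist x y
  /-- `max_x L(x,0) < ∞` -/
  const_bound : ℝ
  /-- cost of constant loops -/
  hT_const : ∀ T, 0 < T → ∀ x, hT T x x ≤ const_bound * T
  /-- there is `k` making the `(L̃+k)`-action of every loop nonnegative -/
  crit_nonempty : ∃ k : ℝ, ∀ T, 0 < T → ∀ x, 0 ≤ hT T x x + k * T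

attribute [instance] TonelliCover.met

namespace TonelliCover

/-- the Mañé critical value of the universal cover:
`c_u(H) = inf {k : A_{L̃+k}(γ) ≥ 0 for all absolutely continuous loops γ in M̃}`. -/
noncomputable def cu (S : TonelliCover) : ℝ :=
  sInf {k : ℝ | ∀ T, 0 < T → ∀ x, 0 ≤ S.hT T x x + k * T}

/-- the Peierls barrier
`h_{H̃}(x,y) = liminf_{T → ∞} (h^T_{H̃}(x,y) + c_u(H)·T) ∈ (-∞, +∞]`. -/
noncomputable def peierls (S : TonelliCover) (x y : S.Mt) : EReal :=
  liminf (fun T : ℝ => ((S.hT T x y + S.cu * T : ℝ) : EReal)) atTop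

end TonelliCover

/-!
Joining points by a unit-speed geodesic followed by a rest costs a bounded action in some
positive time. Prepending such a bridge `z₁ ⇝ x₁` and appending one `x₂ ⇝ z₂` to the curves
realising the finite barrier `h(x₁, x₂)` shows that `h^T(z₁, z₂) + c_u T` is bounded along an
unbounded sequence of times as well.
-/

theorem EReal.liminf_coe_lt_top_iff {α : Type*} {l : Filter α} {f : α → ℝ} :
    liminf (fun a => (f a : EReal)) l < ⊤ ↔ ∃ M : ℝ, ∃ᶠ a in l, f a ≤ M := by
  constructor
  · intro h
    obtain ⟨M, hM, -⟩ := EReal.exists_between_coe_real h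
    exact ⟨M, (frequently_lt_of_liminf_lt (by isBoundedDefault) hM).mono
      fun a ha => (EReal.coe_lt_coe_iff.1 ha).le⟩
  · rintro ⟨M, hM⟩
    calc liminf (fun a => (f a : EReal)) l ≤ M :=
          liminf_le_of_frequently_le (hM.mono fun a ha => EReal.coe_le_coe_iff.2 ha)
            (by isBoundedDefault)
      _ < ⊤ := EReal.coe_lt_top M

namespace TonelliCover

variable (S : TonelliCover)

theorem peierls_lt_top_iff {x y : S.Mt} :
    S.peierls x y < ⊤ ↔ ∃ M : ℝ, ∃ᶠ T in atTop, S.hT T x y + S.cu * T ≤ M :=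
  EReal.liminf_coe_lt_top_iff

theorem exists_hT_le (z w : S.Mt) : ∃ t C : ℝ, 0 < t ∧ S.hT t z w ≤ C := by
  by_cases hzw : z = w
  · exact ⟨1, S.const_bound * 1, one_pos, hzw ▸ S.hT_const 1 one_pos w⟩
  · have hd : 0 < dist z w := dist_pos.2 hzw
    refine ⟨dist z w + 1, S.geo_bound * dist z w + S.const_bound * 1, by linarith, ?_⟩
    calc S.hT (dist z w + 1) z w ≤ S.hT (dist z w) z w + S.hT 1 w w :=
          S.hT_concat _ _ hd one_pos z w w
      _ ≤ S.geo_bound * dist z w + S.const_bound * 1 :=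
          add_le_add (S.hT_geo z w hzw) (S.hT_const 1 one_pos w)

theorem hT_concat₃ {t₁ T t₂ : ℝ} (ht₁ : 0 < t₁) (hT : 0 < T) (ht₂ : 0 < t₂)
    (z₁ x₁ x₂ z₂ : S.Mt) :
    S.hT (t₁ + T + t₂) z₁ z₂ ≤ S.hT t₁ z₁ x₁ + S.hT T x₁ x₂ + S.hT t₂ x₂ z₂ :=
  calc S.hT (t₁ + T + t₂) z₁ z₂ ≤ S.hT (t₁ + T) z₁ x₂ + S.hT t₂ x₂ z₂ :=
        S.hT_concat _ _ (add_pos ht₁ hT) ht₂ z₁ x₂ z₂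
    _ ≤ S.hT t₁ z₁ x₁ + S.hT T x₁ x₂ + S.hT t₂ x₂ z₂ := by
        gcongr
        exact S.hT_concat _ _ ht₁ hT z₁ x₁ x₂

end TonelliCover

/-- **Lemma 4.2.**  If `h_{H̃}(x̃₁, x̃₂) < +∞` for some `x̃₁, x̃₂ ∈ M̃`, then the Peierls
barrier `h_{H̃}` is finite everywhere. -/
theorem statement5 (S : TonelliCover) (x₁ x₂ : S.Mt)
    (h : S.peierls x₁ x₂ < ⊤) :
    ∀ z₁ z₂ : S.Mt, S.peierls z₁ z₂ < ⊤ := by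
  intro z₁ z₂
  obtain ⟨t₁, C₁, ht₁, hC₁⟩ := S.exists_hT_le z₁ x₁
  obtain ⟨t₂, C₂, ht₂, hC₂⟩ := S.exists_hT_le x₂ z₂
  obtain ⟨M, hM⟩ := S.peierls_lt_top_iff.1 h
  refine S.peierls_lt_top_iff.2 ⟨C₁ + M + C₂ + S.cu * (t₁ + t₂), ?_⟩
  have hshift : Tendsto (fun T => t₁ + T + t₂) atTop atTop :=
    tendsto_atTop_add_const_right _ _ (tendsto_atTop_add_const_left _ _ tendsto_id)
  refine hshift.frequently ((hM.and_eventually (eventually_gt_atTop 0)).mono ?_)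
  rintro T ⟨hTM, hT⟩
  have hcat := S.hT_concat₃ ht₁ hT ht₂ z₁ x₁ x₂ z₂
  have hcu : S.cu * (t₁ + T + t₂) = S.cu * T + S.cu * (t₁ + t₂) := by ring
  linarith
end

section
/- Let H̃ be the lift to T*M̃ of a Tonelli Hamiltonian H on T*M, M closed and connected. If there exists a pre-orbit between X₀ ∈ T*M̃ and X₁ ∈ T*M̃, then H̃(X₀) = H̃(X₁). -/
/-!
We axiomatize the lifted Hamiltonian dynamics on the phase space `P = T*M̃`: the
Hamiltonian `H̃`, its flow `Φ^{H̃}`, and the evaluation `λ̃(X_{H̃})` of the lifted Liouville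
form on the Hamiltonian vector field; `H̃` is Lipschitz on regions of bounded energy (such
regions project to compact subsets of `T*M`).  A pre-orbit between `X₀` and `X₁` is a
sequence of piecewise flow curves `Yₙ : [0,Tₙ] → T*M̃` with finitely many discontinuities,
`Tₙ → ∞`, endpoints converging to `X₀` and `X₁`, total jump size `Δ(Yₙ) → 0` and
equi-bounded energy.
-/

open Filter

/-- The Hamiltonian dynamics of the lift `H̃` to `T*M̃` of a Tonelli Hamiltonian on a
closed connected manifold. -/
structure HamSystem (P : Type) [MetricSpace P] where
  /-- the lifted Hamiltonian `H̃` -/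
  H : P → ℝ
  /-- the Hamiltonian flow `Φ^{H̃}` -/
  flow : ℝ → P → P
  /-- `λ̃(X_{H̃})`: the lifted Liouville form evaluated on the Hamiltonian vector field -/
  lambdaX : P → ℝ
  flow_zero : ∀ X, flow 0 X = X
  flow_add : ∀ s t X, flow (s + t) X = flow s (flow t X)
  /-- conservation of energy -/
  energy_const : ∀ t X, H (flow t X) = H X
  H_cont : Continuous H
  lambdaX_cont : Continuous lambdaX
  flow_cont : Continuous fun q : ℝ × P => flow q.1 q.2
  /-- `H̃` is Lipschitz on each region of bounded energy -/
  H_locLip : ∀ K : ℝ, ∃ C : ℝ, ∀ X Y : P, H X ≤ K → H Y ≤ K →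
    |H X - H Y| ≤ C * dist X Y

/-- The combinatorial data of a piecewise orbit `Yₙ : [0,T] → T*M̃`: jump times
`0 = t⁰ < t¹ < … < t^{N} < t^{N+1} = T` and the starting point `p i` of the flow segment on
`[tⁱ, tⁱ⁺¹)`; the curve is `Y(tⁱ + s) = Φ^{H̃}_s (p i)` for `0 ≤ s < tⁱ⁺¹ - tⁱ`, with
`Y(T) = Y(T-)`. -/
structure PiecewiseData (P : Type) where
  T : ℝ
  /-- the number of discontinuities -/
  N : ℕ
  t : ℕ → ℝ
  p : ℕ → P
  t_zero : t 0 = 0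
  t_last : t (N + 1) = T
  t_mono : ∀ i : ℕ, i ≤ N → t i < t (i + 1)

namespace HamSystem

variable {P : Type} [MetricSpace P]

/-- the endpoint `Y(T) = Y(T^{N+1}-)` of a piecewise orbit -/
def pieceStop (S : HamSystem P) (Y : PiecewiseData P) : P :=
  S.flow (Y.t (Y.N + 1) - Y.t Y.N) (Y.p Y.N)

/-- the total jump `Δ(Y) = ∑_{i=1}^{N} dist (Y(tⁱ-), Y(tⁱ))` of a piecewise orbit -/
noncomputable def pieceJump (S : HamSystem P) (Y : PiecewiseData P) : ℝ :=
  ∑ i ∈ Finset.range Y.N, dist (S.flow (Y.t (i + 1) - Y.t i) (Y.p i)) (Y.p (i + 1))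

/-- the Hamiltonian action `∫₀ᵀ (λ̃_{Y(t)}(Ẏ(t)) - (H̃(Y(t)) - k)) dt` of a piecewise
orbit (for the Hamiltonian `H̃ - k`) -/
noncomputable def pieceAction (S : HamSystem P) (k : ℝ) (Y : PiecewiseData P) : ℝ :=
  ∑ i ∈ Finset.range (Y.N + 1),
    ∫ s in (0:ℝ)..(Y.t (i + 1) - Y.t i),
      (S.lambdaX (S.flow s (Y.p i)) - (S.H (S.flow s (Y.p i)) - k))

/-- A pre-orbit between `X₀` and `X₁`: a sequence of piecewise flow curves with `Tₙ → ∞`,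
endpoints converging to `X₀` resp. `X₁`, total jump size tending to `0`, and equi-bounded
energy. -/
structure PreOrbit (S : HamSystem P) (X₀ X₁ : P) where
  Y : ℕ → PiecewiseData P
  tendsto_T : Tendsto (fun n => (Y n).T) atTop atTop
  tendsto_start : Tendsto (fun n => (Y n).p 0) atTop (nhds X₀)
  tendsto_stop : Tendsto (fun n => S.pieceStop (Y n)) atTop (nhds X₁)
  tendsto_jump : Tendsto (fun n => S.pieceJump (Y n)) atTop (nhds 0)
  /-- equi-bounded energy: `H̃(Yₙ(s)) ≤ K` for all `n` and `s` -/
  energy_bdd : ∃ K : ℝ, ∀ n i, i ≤ (Y n).N → S.H ((Y n).p i) ≤ K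

theorem H_pieceStop (S : HamSystem P) (Y : PiecewiseData P) :
    S.H (S.pieceStop Y) = S.H (Y.p Y.N) :=
  S.energy_const _ _

/-- Energy is conserved along each flow segment, so the energy only changes at the jumps,
where it changes by at most `C` times the jump size. -/
theorem abs_H_pieceStop_sub_H_start_le (S : HamSystem P) (Y : PiecewiseData P) {K C : ℝ}
    (hC : ∀ X Y : P, S.H X ≤ K → S.H Y ≤ K → |S.H X - S.H Y| ≤ C * dist X Y)
    (hK : ∀ i, i ≤ Y.N → S.H (Y.p i) ≤ K) :
    |S.H (S.pieceStop Y) - S.H (Y.p 0)| ≤ C * S.pieceJump Y := by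
  rw [H_pieceStop, ← Finset.sum_range_sub (fun i => S.H (Y.p i)), pieceJump, Finset.mul_sum]
  refine (Finset.abs_sum_le_sum_abs _ _).trans (Finset.sum_le_sum fun i hi => ?_)
  have hi : i < Y.N := Finset.mem_range.mp hi
  rw [← S.energy_const (Y.t (i + 1) - Y.t i) (Y.p i), abs_sub_comm]
  exact hC _ _ (by rw [S.energy_const]; exact hK i hi.le) (hK (i + 1) hi)

end HamSystem

/-- **Lemma 5.2.**  If there exists a pre-orbit between `X₀` and `X₁`, then
`H̃(X₀) = H̃(X₁)`. -/
theorem statement10 {P : Type} [MetricSpace P] (S : HamSystem P) (X₀ X₁ : P)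
    (h : Nonempty (S.PreOrbit X₀ X₁)) : S.H X₀ = S.H X₁ := by
  obtain ⟨O⟩ := h
  obtain ⟨K, hK⟩ := O.energy_bdd
  obtain ⟨C, hC⟩ := S.H_locLip K
  have hgain : Tendsto (fun n => S.H (S.pieceStop (O.Y n)) - S.H ((O.Y n).p 0))
      atTop (nhds 0) := by
    refine squeeze_zero_norm (fun n => ?_) (by simpa using O.tendsto_jump.const_mul C)
    exact S.abs_H_pieceStop_sub_H_start_le (O.Y n) hC (hK n)
  have hlim : Tendsto (fun n => S.H (S.pieceStop (O.Y n)) - S.H ((O.Y n).p 0))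
      atTop (nhds (S.H X₁ - S.H X₀)) :=
    ((S.H_cont.tendsto X₁).comp O.tendsto_stop).sub
      ((S.H_cont.tendsto X₀).comp O.tendsto_start)
  exact (sub_eq_zero.mp (tendsto_nhds_unique hlim hgain)).symm
end

section
/- Let G be the Heisenberg group (ℝ³ with product (x,y,z)⋆(x',y',z') = (x+x', y+y', z+z'+xy')), Γ the integer lattice, Z ⊂ Γ its center (elements (0,0,n), n ∈ ℤ), and M̄ = Z\G the abelian cover of M = Γ\G. For the Lagrangian L = ½(ẋ² + ẏ² + (ż − xẏ)²) + ż − xẏ, the projected Aubry set of the lifted system on the abelian cover is all of M̄: 𝒜_{H̄} = M̄. Equivalently, h_{H̄}(p,p) = 0 for all p ∈ M̄. -/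
/-!
# Statement 18

Let `G` be the Heisenberg group (`ℝ³` with product
`(x,y,z)⋆(x',y',z') = (x+x', y+y', z+z'+xy')`), `Γ` the integer lattice, `Z ⊆ Γ` its
center (the elements `(0,0,n)`, `n ∈ ℤ`), and `M̄ = Z\G` the abelian cover of `M = Γ\G`.
For the Lagrangian `L = ½(ẋ² + ẏ² + (ż - xẏ)²) + ż - xẏ`, the projected Aubry set of
the lifted system on the abelian cover is all of `M̄`: `𝒜_{H̄} = M̄`; equivalently,
`h_{H̄}(p,p) = 0` for every `p ∈ M̄`.

The center acts on `G ≅ ℝ³` by `(0,0,n)⋆(x,y,z) = (x,y,z+n)`, so the abelian cover is the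
quotient of `ℝ³` by the translations `(0,0,n)`, `n ∈ ℤ`; we work with representatives in
`ℝ³`: a curve of `M̄` from `p` to `q` is a curve of `ℝ³` from `p` to `q + (0,0,n)` for
some `n ∈ ℤ`, and loops of `M̄` are the curves with `γ(T) = γ(0) + (0,0,n)`.  The Mañé
critical value of the abelian cover is
`c_a = inf {k : A_{L+k}(γ) ≥ 0 for every absolutely continuous loop γ of M̄}`, and the
Peierls barrier on `M̄` is `h_{H̄}(p,q) = liminf_{T→∞} (h^T_{H̄}(p,q) + c_a T)`.
-/

open Filter

/-- points of the Heisenberg group `G ≅ ℝ³` -/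
abbrev HeisPt : Type := ℝ × ℝ × ℝ

/-- the left-invariant Tonelli Lagrangian `L = ½(ẋ² + ẏ² + (ż - xẏ)²) + ż - xẏ` -/
noncomputable def heisL (p v : HeisPt) : ℝ :=
  (v.1 ^ 2 + v.2.1 ^ 2 + (v.2.2 - p.1 * v.2.1) ^ 2) / 2 + v.2.2 - p.1 * v.2.1

/-- `γ : [0,T] → ℝ³` is an absolutely continuous curve with derivative `v` and integrable
Lagrangian `L`-action -/
def IsACCurve (L : HeisPt → HeisPt → ℝ) (T : ℝ) (γ v : ℝ → HeisPt) : Prop :=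
  IntervalIntegrable v MeasureTheory.volume 0 T ∧
  (∀ t ∈ Set.Icc (0:ℝ) T, γ t = γ 0 + ∫ s in (0:ℝ)..t, v s) ∧
  IntervalIntegrable (fun t => L (γ t) (v t)) MeasureTheory.volume 0 T

/-- the Lagrangian action `A_L(γ) = ∫₀ᵀ L(γ, γ̇) dt` -/
noncomputable def curveAction (L : HeisPt → HeisPt → ℝ) (T : ℝ) (γ v : ℝ → HeisPt) : ℝ :=
  ∫ t in (0:ℝ)..T, L (γ t) (v t)

/-- the deck transformations of `ℝ³ → M̄ = Z\G`: the central translations `(0,0,n)` -/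
def deck (n : ℤ) : HeisPt := ((0:ℝ), (0:ℝ), (n:ℝ))

/-- the finite-time potential `h^T_{H̄}(p,q)` on the abelian cover `M̄` (computed with
representatives in `ℝ³`): the minimal `L`-action over absolutely continuous curves from
`p` to a representative of `q` in time `T` -/
noncomputable def hTimeAb (L : HeisPt → HeisPt → ℝ) (T : ℝ) (p q : HeisPt) : ℝ :=
  sInf {a : ℝ | ∃ γ v : ℝ → HeisPt, ∃ n : ℤ,
    IsACCurve L T γ v ∧ γ 0 = p ∧ γ T = q + deck n ∧ a = curveAction L T γ v}

/-- the Mañé critical value `c_a` of the abelian cover: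
`c_a = inf {k : A_{L+k}(γ) ≥ 0 for every absolutely continuous loop γ of M̄}` -/
noncomputable def maneCa (L : HeisPt → HeisPt → ℝ) : ℝ :=
  sInf {k : ℝ | ∀ T, 0 < T → ∀ γ v : ℝ → HeisPt, IsACCurve L T γ v →
    (∃ n : ℤ, γ T = γ 0 + deck n) → 0 ≤ curveAction L T γ v + k * T}

/-- the Peierls barrier `h_{H̄}(p,q) = liminf_{T→∞} (h^T_{H̄}(p,q) + c_a T)` of the system
lifted to the abelian cover -/
noncomputable def peierlsAb (L : HeisPt → HeisPt → ℝ) (p q : HeisPt) : EReal :=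
  liminf (fun T : ℝ => ((hTimeAb L T p q + maneCa L * T : ℝ) : EReal)) atTop

/-!
Completing the square, `L + ½ = ½(ẋ² + ẏ² + (ż - xẏ + 1)²) ≥ 0`, so every curve of duration
`T` has action at least `-T/2`; the vertical line `t ↦ p - t e₃`, along which `L ≡ -½`,
attains this bound and closes up in `M̄` at every integer time. Hence `c_a = ½`, the
functions `T ↦ h^T_{H̄}(p,p) + T/2` are nonnegative and vanish at integer times, and their
`liminf` is `0`.
-/

section LowerBound

variable {L : HeisPt → HeisPt → ℝ} {m T : ℝ} {γ v : ℝ → HeisPt}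

theorem mul_le_curveAction (hL : ∀ p w, m ≤ L p w) (hT : 0 ≤ T) (hγ : IsACCurve L T γ v) :
    m * T ≤ curveAction L T γ v := by
  have h := intervalIntegral.integral_mono_on hT intervalIntegrable_const hγ.2.2
    fun t _ => hL (γ t) (v t)
  rwa [intervalIntegral.integral_const, smul_eq_mul, sub_zero, mul_comm] at h

end LowerBound

section Line

variable {L : HeisPt → HeisPt → ℝ} {p w : HeisPt} {c : ℝ}

theorem isACCurve_line (hL : ∀ t : ℝ, L (p + t • w) w = c) (T : ℝ) :
    IsACCurve L T (fun t : ℝ => p + t • w) (fun _ => w) := by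
  refine ⟨intervalIntegrable_const, fun t _ => by simp, ?_⟩
  simp only [hL]
  exact intervalIntegrable_const

theorem curveAction_line (hL : ∀ t : ℝ, L (p + t • w) w = c) (T : ℝ) :
    curveAction L T (fun t : ℝ => p + t • w) (fun _ => w) = c * T := by
  simp [curveAction, hL, mul_comm]

end Line

section PotentialBounds

variable {L : HeisPt → HeisPt → ℝ} {m T : ℝ} {p q : HeisPt}

theorem hTimeAb_le_curveAction (hL : ∀ p w, m ≤ L p w) (hT : 0 ≤ T) {γ v : ℝ → HeisPt}
    {n : ℤ} (hγ : IsACCurve L T γ v) (hp : γ 0 = p) (hq : γ T = q + deck n) :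
    hTimeAb L T p q ≤ curveAction L T γ v :=
  csInf_le ⟨m * T, fun _ ⟨_, _, _, hγ', _, _, ha⟩ => ha ▸ mul_le_curveAction hL hT hγ'⟩
    ⟨γ, v, n, hγ, hp, hq, rfl⟩

theorem mul_le_hTimeAb_self (hL : ∀ p w, m ≤ L p w) (hL0 : L p 0 = 0) (hT : 0 ≤ T) :
    m * T ≤ hTimeAb L T p p := by
  have hconst : ∀ t : ℝ, L (p + t • 0) 0 = 0 := by simpa using fun _ : ℝ => hL0
  refine le_csInf ⟨_, fun t : ℝ => p + t • 0, _, 0, isACCurve_line hconst T, by simp,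
    by simp [deck], rfl⟩ fun _ ⟨_, _, _, hγ, _, _, ha⟩ => ha ▸ mul_le_curveAction hL hT hγ

end PotentialBounds

theorem neg_half_le_heisL (p v : HeisPt) : -(1 / 2) ≤ heisL p v := by
  unfold heisL
  nlinarith [sq_nonneg v.1, sq_nonneg v.2.1, sq_nonneg (v.2.2 - p.1 * v.2.1 + 1)]

theorem heisL_zero (p : HeisPt) : heisL p 0 = 0 := by
  simp [heisL]

def verticalDown : HeisPt := (0, 0, -1)

theorem heisL_verticalDown (p : HeisPt) (t : ℝ) :
    heisL (p + t • verticalDown) verticalDown = -(1 / 2) := by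
  norm_num [heisL, verticalDown]

theorem add_natCast_smul_verticalDown (p : HeisPt) (n : ℕ) :
    p + (n : ℝ) • verticalDown = p + deck (-n) := by
  simp [verticalDown, deck]

theorem maneCa_heisL : maneCa heisL = 1 / 2 := by
  set S := {k : ℝ | ∀ T, 0 < T → ∀ γ v : ℝ → HeisPt, IsACCurve heisL T γ v →
    (∃ n : ℤ, γ T = γ 0 + deck n) → 0 ≤ curveAction heisL T γ v + k * T}
  have half_mem : 1 / 2 ∈ S := fun T hT γ v hγ _ => by
    linarith [mul_le_curveAction neg_half_le_heisL hT.le hγ]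
  have half_le : ∀ k ∈ S, 1 / 2 ≤ k := fun k hk => by
    have h := hk 1 one_pos (fun t : ℝ => 0 + t • verticalDown) _
      (isACCurve_line (heisL_verticalDown 0) 1)
      ⟨-1, by simpa using add_natCast_smul_verticalDown 0 1⟩
    rw [curveAction_line (heisL_verticalDown 0)] at h
    linarith
  exact le_antisymm (csInf_le ⟨1 / 2, half_le⟩ half_mem) (le_csInf ⟨1 / 2, half_mem⟩ half_le)

theorem hTimeAb_heisL_natCast_le (p : HeisPt) (n : ℕ) :
    hTimeAb heisL n p p ≤ -(1 / 2) * n := by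
  rw [← curveAction_line (heisL_verticalDown p)]
  exact hTimeAb_le_curveAction neg_half_le_heisL n.cast_nonneg
    (isACCurve_line (heisL_verticalDown p) n) (by simp) (add_natCast_smul_verticalDown p n)

theorem EReal.liminf_coe_eq_zero {α : Type*} {l : Filter α} {f : α → ℝ}
    (h_nonneg : ∀ᶠ x in l, 0 ≤ f x) (h_nonpos : ∃ᶠ x in l, f x ≤ 0) :
    liminf (fun x => (f x : EReal)) l = 0 :=
  le_antisymm
    (liminf_le_of_frequently_le' (h_nonpos.mono fun _ h => EReal.coe_nonpos.2 h))
    (le_liminf_of_le (by isBoundedDefault) (h_nonneg.mono fun _ h => EReal.coe_nonneg.2 h))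

theorem peierlsAb_heisL_self (p : HeisPt) : peierlsAb heisL p p = 0 := by
  refine EReal.liminf_coe_eq_zero ?_ ?_ <;> rw [maneCa_heisL]
  · filter_upwards [eventually_ge_atTop 0] with T hT
    linarith [mul_le_hTimeAb_self neg_half_le_heisL (heisL_zero p) hT]
  · refine frequently_atTop.2 fun b => ⟨⌈b⌉₊, Nat.le_ceil b, ?_⟩
    linarith [hTimeAb_heisL_natCast_le p ⌈b⌉₊]

/-- **Lemma 6.4.**  For the Heisenberg nilmanifold example, the projected Aubry set of the
system lifted to the abelian cover `M̄ = Z\G` is all of `M̄`: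
`𝒜_{H̄} = {p : h_{H̄}(p,p) = 0} = M̄`, i.e. `h_{H̄}(p,p) = 0` for every point. -/
theorem statement18 :
    {p : HeisPt | peierlsAb heisL p p = 0} = Set.univ :=
  Set.eq_univ_of_forall peierlsAb_heisL_self
end
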